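/- Let (X,d) be a metric space, μ, ν ∈ 𝓜(X), f bounded continuous with sup f < 1, and let α ∈ 𝓜₂(𝔠²) satisfy 𝔥₁²α = μ, 𝔥₂²α = ν. Then ∫_X f dμ + ∫_X Sf dν ≤ ∫_{𝔠²} (r₁² + r₂² − 2r₁r₂ cos(d_{π/2}(x₁,x₂))) dα([x₁,r₁],[x₂,r₂]). -/

import Mathlib

open Real MeasureTheory ENNReal

/-- Squared cone distance `d_𝔠²([x₁,r₁],[x₂,r₂]) = r₁² + r₂² − 2r₁r₂ cos(min(d(x₁,x₂),π))`,
on representatives in `X × ℝ`. -/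
noncomputable def coneCost {X : Type*} [MetricSpace X] (p q : X × ℝ) : ℝ :=
  p.2 ^ 2 + q.2 ^ 2 - 2 * p.2 * q.2 * Real.cos (min (dist p.1 q.1) π)

/-- First homogeneous marginal `𝔥₁²α = (x₁)_#(r₁² α)` of a plan on the (squared) cone. -/
noncomputable def hmarg1 {X : Type*} [MeasurableSpace X]
    (α : Measure ((X × ℝ) × (X × ℝ))) : Measure X :=
  Measure.map (fun p => p.1.1) (α.withDensity fun p => ENNReal.ofReal (p.1.2 ^ 2))

/-- Second homogeneous marginal `𝔥₂²α = (x₂)_#(r₂² α)`. -/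
noncomputable def hmarg2 {X : Type*} [MeasurableSpace X]
    (α : Measure ((X × ℝ) × (X × ℝ))) : Measure X :=
  Measure.map (fun p => p.2.1) (α.withDensity fun p => ENNReal.ofReal (p.2.2 ^ 2))

/-- The squared Hellinger–Kantorovich distance:
`HK²(μ₁,μ₂) = inf { ∫ d_𝔠²(η₁,η₂) dα : 𝔥ᵢ²α = μᵢ }`. -/
noncomputable def HK2 {X : Type*} [MetricSpace X] [MeasurableSpace X]
    (μ ν : Measure X) : ℝ≥0∞ :=
  ⨅ (α : Measure ((X × ℝ) × (X × ℝ))) (_ : hmarg1 α = μ) (_ : hmarg2 α = ν),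
    ∫⁻ p, ENNReal.ofReal (coneCost p.1 p.2) ∂α

/-- `Sf(y) = inf_{x ∈ X} (1 − cos²(d_{π/2}(x,y))/(1−f(x)))`. -/
noncomputable def Stransform {X : Type*} [MetricSpace X] (f : X → ℝ) (y : X) : ℝ :=
  ⨅ x : X, (1 - Real.cos (min (dist x y) (π / 2)) ^ 2 / (1 - f x))

/-! The pointwise inequality `f(x₁) r₁² + Sf(x₂) r₂² ≤ r₁² + r₂² − 2 r₁ r₂ cos d_{π/2}(x₁, x₂)`
follows from `Sf(x₂) ≤ 1 − c²/(1 − f(x₁))` with `c = cos d_{π/2}(x₁, x₂)` and the AM–GM bound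
`2 r₁ r₂ c ≤ (1 − f(x₁)) r₁² + c²/(1 − f(x₁)) r₂²`. Integrating it against `α` gives the claim,
since by definition of the homogeneous marginals `∫ f dμ = ∫ f(x₁) r₁² dα` and
`∫ Sf dν = ∫ Sf(x₂) r₂² dα`. -/

lemma MeasureTheory.ofReal_integral_le_lintegral_ofReal {Ω : Type*} [MeasurableSpace Ω]
    {μ : Measure Ω} (g : Ω → ℝ) :
    ENNReal.ofReal (∫ x, g x ∂μ) ≤ ∫⁻ x, ENNReal.ofReal (g x) ∂μ := by
  by_cases hg : Integrable g μ
  · rw [integral_eq_lintegral_pos_part_sub_lintegral_neg_part hg]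
    exact (ENNReal.ofReal_le_ofReal (sub_le_self _ ENNReal.toReal_nonneg)).trans
      ENNReal.ofReal_toReal_le
  · simp [integral_undef hg]

lemma two_mul_mul_mul_le_mul_sq_add_div_mul_sq {a : ℝ} (ha : 0 < a) (r s c : ℝ) :
    2 * r * s * c ≤ a * r ^ 2 + c ^ 2 / a * s ^ 2 := by
  have hsq : a * r ^ 2 + c ^ 2 / a * s ^ 2 - 2 * r * s * c = (a * r - c * s) ^ 2 / a := by
    field_simp
    ring
  linarith [div_nonneg (sq_nonneg (a * r - c * s)) ha.le]

section Stransform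

variable {X : Type*} [MetricSpace X] {f : X → ℝ} {M : ℝ}

lemma one_sub_one_div_le_one_sub_cos_sq_div (hM : M < 1) (hfM : ∀ x, f x ≤ M) (x y : X) :
    1 - 1 / (1 - M) ≤ 1 - cos (min (dist x y) (π / 2)) ^ 2 / (1 - f x) := by
  have : cos (min (dist x y) (π / 2)) ^ 2 / (1 - f x) ≤ 1 / (1 - M) :=
    div_le_div₀ zero_le_one (cos_sq_le_one _) (by linarith) (by linarith [hfM x])
  linarith

lemma bddBelow_range_one_sub_cos_sq_div (hM : M < 1) (hfM : ∀ x, f x ≤ M) (y : X) :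
    BddBelow (Set.range fun x => 1 - cos (min (dist x y) (π / 2)) ^ 2 / (1 - f x)) :=
  ⟨_, Set.forall_mem_range.2 fun x => one_sub_one_div_le_one_sub_cos_sq_div hM hfM x y⟩

lemma Stransform_le (hM : M < 1) (hfM : ∀ x, f x ≤ M) (x y : X) :
    Stransform f y ≤ 1 - cos (min (dist x y) (π / 2)) ^ 2 / (1 - f x) :=
  ciInf_le (bddBelow_range_one_sub_cos_sq_div hM hfM y) x

lemma abs_Stransform_le (hM : M < 1) (hfM : ∀ x, f x ≤ M) (y : X) :
    |Stransform f y| ≤ 1 + 1 / (1 - M) := by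
  have : Nonempty X := ⟨y⟩
  have hlow : 1 - 1 / (1 - M) ≤ Stransform f y :=
    le_ciInf fun x => one_sub_one_div_le_one_sub_cos_sq_div hM hfM x y
  have hup : Stransform f y ≤ 1 :=
    (Stransform_le hM hfM y y).trans
      (sub_le_self _ (div_nonneg (sq_nonneg _) (by linarith [hfM y])))
  have : 0 < 1 / (1 - M) := one_div_pos.2 (by linarith)
  rw [abs_le]
  constructor <;> linarith

lemma upperSemicontinuous_Stransform (hM : M < 1) (hfM : ∀ x, f x ≤ M) :
    UpperSemicontinuous (Stransform f) :=
  upperSemicontinuous_ciInf (bddBelow_range_one_sub_cos_sq_div hM hfM) fun _ =>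
    Continuous.upperSemicontinuous <| by fun_prop

theorem mul_sq_add_Stransform_mul_sq_le (hM : M < 1) (hfM : ∀ x, f x ≤ M) (x₁ x₂ : X)
    (r₁ r₂ : ℝ) :
    f x₁ * r₁ ^ 2 + Stransform f x₂ * r₂ ^ 2 ≤
      r₁ ^ 2 + r₂ ^ 2 - 2 * r₁ * r₂ * cos (min (dist x₁ x₂) (π / 2)) := by
  have hS := mul_le_mul_of_nonneg_right (Stransform_le hM hfM x₁ x₂) (sq_nonneg r₂)
  have hAMGM := two_mul_mul_mul_le_mul_sq_add_div_mul_sq (a := 1 - f x₁)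
    (by linarith [hfM x₁]) r₁ r₂ (cos (min (dist x₁ x₂) (π / 2)))
  linarith

end Stransform

section HomogeneousMarginals

variable {X : Type*} [MeasurableSpace X] {α : Measure ((X × ℝ) × (X × ℝ))} {g : X → ℝ}

lemma integral_hmarg1 (hg : Measurable g) :
    ∫ x, g x ∂hmarg1 α = ∫ p, g p.1.1 * p.1.2 ^ 2 ∂α := by
  rw [hmarg1, integral_map (by fun_prop) hg.aestronglyMeasurable,
    integral_withDensity_eq_integral_toReal_smul (by fun_prop) (ae_of_all _ fun _ => ofReal_lt_top)]
  simp_rw [toReal_ofReal (sq_nonneg _), smul_eq_mul, mul_comm]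

lemma integral_hmarg2 (hg : Measurable g) :
    ∫ x, g x ∂hmarg2 α = ∫ p, g p.2.1 * p.2.2 ^ 2 ∂α := by
  rw [hmarg2, integral_map (by fun_prop) hg.aestronglyMeasurable,
    integral_withDensity_eq_integral_toReal_smul (by fun_prop) (ae_of_all _ fun _ => ofReal_lt_top)]
  simp_rw [toReal_ofReal (sq_nonneg _), smul_eq_mul, mul_comm]

lemma integrable_sq_add_sq (hmom : ∫⁻ p, ENNReal.ofReal (p.1.2 ^ 2 + p.2.2 ^ 2) ∂α < ⊤) :
    Integrable (fun p : (X × ℝ) × (X × ℝ) => p.1.2 ^ 2 + p.2.2 ^ 2) α :=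
  ⟨by fun_prop, (hasFiniteIntegral_iff_ofReal (ae_of_all _ fun _ => by positivity)).2 hmom⟩

lemma integrable_mul_sq_fst (hmom : ∫⁻ p, ENNReal.ofReal (p.1.2 ^ 2 + p.2.2 ^ 2) ∂α < ⊤)
    (hg : Measurable g) {C : ℝ} (hC : ∀ x, |g x| ≤ C) :
    Integrable (fun p => g p.1.1 * p.1.2 ^ 2) α := by
  refine Integrable.bdd_mul (c := C) ?_ (hg.comp measurable_fst.fst).aestronglyMeasurable
    (ae_of_all _ fun p => hC p.1.1)
  refine (integrable_sq_add_sq hmom).mono'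
    (measurable_fst.snd.pow_const 2).aestronglyMeasurable (ae_of_all _ fun p => ?_)
  rw [Real.norm_of_nonneg (sq_nonneg _)]
  exact le_add_of_nonneg_right (sq_nonneg _)

lemma integrable_mul_sq_snd (hmom : ∫⁻ p, ENNReal.ofReal (p.1.2 ^ 2 + p.2.2 ^ 2) ∂α < ⊤)
    (hg : Measurable g) {C : ℝ} (hC : ∀ x, |g x| ≤ C) :
    Integrable (fun p => g p.2.1 * p.2.2 ^ 2) α := by
  refine Integrable.bdd_mul (c := C) ?_ (hg.comp measurable_snd.fst).aestronglyMeasurable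
    (ae_of_all _ fun p => hC p.2.1)
  refine (integrable_sq_add_sq hmom).mono'
    (measurable_snd.snd.pow_const 2).aestronglyMeasurable (ae_of_all _ fun p => ?_)
  rw [Real.norm_of_nonneg (sq_nonneg _)]
  exact le_add_of_nonneg_left (sq_nonneg _)

end HomogeneousMarginals

theorem integral_Stransform_le_cone_cost_general {X : Type*} [MetricSpace X] [MeasurableSpace X]
    [BorelSpace X] (μ ν : Measure X)
    (f : X → ℝ) (hc : Continuous f) (hb : ∃ C, ∀ x, |f x| ≤ C)
    (hf : ∃ M < (1 : ℝ), ∀ x, f x ≤ M)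
    (α : Measure ((X × ℝ) × (X × ℝ)))
    (hmom : ∫⁻ p, ENNReal.ofReal (p.1.2 ^ 2 + p.2.2 ^ 2) ∂α < ⊤)
    (h1 : hmarg1 α = μ) (h2 : hmarg2 α = ν) :
    ENNReal.ofReal (∫ x, f x ∂μ + ∫ y, Stransform f y ∂ν) ≤
      ∫⁻ p, ENNReal.ofReal (p.1.2 ^ 2 + p.2.2 ^ 2 -
        2 * p.1.2 * p.2.2 * Real.cos (min (dist p.1.1 p.2.1) (π / 2))) ∂α := by
  obtain ⟨M, hM, hfM⟩ := hf
  obtain ⟨C, hC⟩ := hb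
  have hSmeas := (upperSemicontinuous_Stransform hM hfM).measurable
  have hint₁ := integrable_mul_sq_fst hmom hc.measurable hC
  have hint₂ := integrable_mul_sq_snd hmom hSmeas (abs_Stransform_le hM hfM)
  rw [← h1, ← h2, integral_hmarg1 hc.measurable, integral_hmarg2 hSmeas,
    ← integral_add hint₁ hint₂]
  exact (ofReal_integral_le_lintegral_ofReal _).trans <| lintegral_mono fun p =>
    ENNReal.ofReal_le_ofReal (mul_sq_add_Stransform_mul_sq_le hM hfM p.1.1 p.2.1 p.1.2 p.2.2)

/-- For any plan `α` with homogeneous marginals `μ, ν` (and finite second moment) and any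
admissible `f`, one has `∫ f dμ + ∫ Sf dν ≤ ∫ (r₁² + r₂² − 2r₁r₂ cos d_{π/2}) dα`. -/
theorem integral_Stransform_le_cone_cost {X : Type*} [MetricSpace X] [MeasurableSpace X]
    [BorelSpace X] (μ ν : Measure X) [IsFiniteMeasure μ] [IsFiniteMeasure ν]
    (f : X → ℝ) (hc : Continuous f) (hb : ∃ C, ∀ x, |f x| ≤ C)
    (hf : ∃ M < (1 : ℝ), ∀ x, f x ≤ M)
    (α : Measure ((X × ℝ) × (X × ℝ)))
    (hmom : ∫⁻ p, ENNReal.ofReal (p.1.2 ^ 2 + p.2.2 ^ 2) ∂α < ⊤)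
    (h1 : hmarg1 α = μ) (h2 : hmarg2 α = ν) :
    ENNReal.ofReal (∫ x, f x ∂μ + ∫ y, Stransform f y ∂ν) ≤
      ∫⁻ p, ENNReal.ofReal (p.1.2 ^ 2 + p.2.2 ^ 2 -
        2 * p.1.2 * p.2.2 * Real.cos (min (dist p.1.1 p.2.1) (π / 2))) ∂α :=
  integral_Stransform_le_cone_cost_general μ ν f hc hb hf α hmom h1 h2
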